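/- arXiv:math/0703578 — 5 statements merged into one kernel-verified Lean document; each statement's English description precedes it below -/
import Mathlib

section
/- The elliptic curve E : Y² = X³ + A·X + B (with A, B ∈ ℤ and 4A³ + 27B² ≠ 0) has a rational point of order 3 if and only if there exist integers z₁, z₂ such that A = 27z₁⁴ + 6z₁z₂ and B = z₂² − 27z₁⁶. -/
/-! A point `P = (x, y)` has order 3 iff `2P = -P`, i.e. iff `y ≠ 0` and the tangent slope
`s = (3x² + A) / (2y)` satisfies `s² = 3x`. Eliminating `x` and `y` makes `s` a root of the monic
integer polynomial `X⁸ + 18A X⁴ + 108B X² - 27A²`, so `s` is an integer divisible by 3. Then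
`z₁ = s / 3` and `z₂ = y - 9z₁³`, an integer because its square is `B + 27z₁⁶`. Conversely
`(3z₁², 9z₁³ + z₂)` is a point of order 3; its `y`-coordinate vanishes only if `4A³ + 27B² = 0`. -/

/-- The elliptic curve `E : Y² = X³ + A·X + B` over `ℚ`, as an affine Weierstrass curve. -/
noncomputable def E (A B : ℤ) : WeierstrassCurve.Affine ℚ :=
  { a₁ := 0, a₂ := 0, a₃ := 0, a₄ := (A : ℚ), a₆ := (B : ℚ) }

namespace WeierstrassCurve.Affine.Point

variable {F : Type*} [Field F] [DecidableEq F] {W : WeierstrassCurve.Affine F} {x y : F}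

lemma addOrderOf_some_eq_three_iff (h : W.Nonsingular x y) :
    addOrderOf (some x y h) = 3 ↔ y ≠ W.negY x y ∧ W.addX x x (W.slope x x y y) = x := by
  have : Fact (Nat.Prime 3) := ⟨Nat.prime_three⟩
  rw [addOrderOf_eq_prime_iff, and_iff_left (some_ne_zero h),
    show (3 : ℕ) • some x y h = some x y h + some x y h - -some x y h by
      rw [sub_neg_eq_add, succ_nsmul, two_nsmul], sub_eq_zero]
  by_cases hy : y = W.negY x y
  · rw [add_self_of_Y_eq hy, eq_comm, neg_eq_zero]
    exact iff_of_false (some_ne_zero h) fun h' ↦ h'.1 hy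
  · rw [add_self_of_Y_ne' hy, neg_inj, some.injEq, negAddY]
    refine ⟨fun h' ↦ ⟨hy, h'.1⟩, fun ⟨_, hx⟩ ↦ ⟨hx, ?_⟩⟩
    rw [hx, sub_self, mul_zero, zero_add]

end WeierstrassCurve.Affine.Point

lemma Rat.exists_intCast_eq_of_isIntegral {q : ℚ} (h : IsIntegral ℤ q) : ∃ n : ℤ, (n : ℚ) = q := by
  simpa using IsIntegrallyClosed.isIntegral_iff.mp h

open WeierstrassCurve.Affine

section E

variable {A B : ℤ} {x y : ℚ}

lemma E_equation_iff : (E A B).Equation x y ↔ y ^ 2 = x ^ 3 + A * x + B := by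
  simp [equation_iff, E]

lemma E_negY : (E A B).negY x y = -y := by
  simp [E]

lemma E_nonsingular_of_Y_ne_zero (hE : (E A B).Equation x y) (hy : y ≠ 0) :
    (E A B).Nonsingular x y :=
  (nonsingular_iff' x y).mpr ⟨hE, Or.inr (by simpa [E] using hy)⟩

lemma E_addOrderOf_some_eq_three_iff (h : (E A B).Nonsingular x y) :
    addOrderOf (Point.some x y h) = 3 ↔ y ≠ 0 ∧ ((3 * x ^ 2 + A) / (2 * y)) ^ 2 = 3 * x := by
  rw [Point.addOrderOf_some_eq_three_iff, E_negY, ne_eq, self_eq_neg]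
  refine and_congr_right fun hy ↦ ?_
  rw [slope_of_Y_ne rfl (by rwa [E_negY, ne_eq, self_eq_neg]), E_negY]
  simp only [addX, E, mul_zero, zero_mul, add_zero, sub_zero, sub_neg_eq_add, ← two_mul]
  constructor <;> intro <;> linarith

end E

lemma exists_addOrderOf_E_eq_three_iff (A B : ℤ) :
    (∃ P : (E A B).Point, addOrderOf P = 3) ↔
      ∃ x y : ℚ, y ^ 2 = x ^ 3 + A * x + B ∧ y ≠ 0 ∧ ((3 * x ^ 2 + A) / (2 * y)) ^ 2 = 3 * x := by
  constructor
  · rintro ⟨_ | ⟨x, y, h⟩, hP⟩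
    · simp [← Point.zero_def] at hP
    · exact ⟨x, y, E_equation_iff.mp h.1, (E_addOrderOf_some_eq_three_iff h).mp hP⟩
  · rintro ⟨x, y, hE, hy, h3⟩
    have h := E_nonsingular_of_Y_ne_zero (E_equation_iff.mpr hE) hy
    exact ⟨_, (E_addOrderOf_some_eq_three_iff h).mpr ⟨hy, h3⟩⟩

lemma exists_int_params_of_tangent_slope {A B : ℤ} {x y s : ℚ}
    (hE : y ^ 2 = x ^ 3 + A * x + B) (hs : 2 * y * s = 3 * x ^ 2 + A) (h3 : s ^ 2 = 3 * x) :
    ∃ z₁ z₂ : ℤ, A = 27 * z₁ ^ 4 + 6 * z₁ * z₂ ∧ B = z₂ ^ 2 - 27 * z₁ ^ 6 := by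
  obtain rfl : x = s ^ 2 / 3 := by linarith
  have hroot : s ^ 8 + 18 * A * s ^ 4 + 108 * B * s ^ 2 - 27 * A ^ 2 = 0 := by
    linear_combination 27 * (2 * y * s + 3 * (s ^ 2 / 3) ^ 2 + A) * hs - 108 * s ^ 2 * hE
  have hs_int : IsIntegral ℤ s := by
    open Polynomial in
    refine ⟨X ^ 8 + C (18 * A) * X ^ 4 + C (108 * B) * X ^ 2 - C (27 * A ^ 2), by monicity!, ?_⟩
    simp only [eval₂_sub, eval₂_add, eval₂_mul, eval₂_pow, eval₂_X, eval₂_C]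
    simpa using hroot
  obtain ⟨n, rfl⟩ := Rat.exists_intCast_eq_of_isIntegral hs_int
  have hroot_int : n ^ 8 + 18 * A * n ^ 4 + 108 * B * n ^ 2 - 27 * A ^ 2 = 0 := by
    exact_mod_cast hroot
  obtain ⟨z₁, rfl⟩ : (3 : ℤ) ∣ n := Int.prime_three.dvd_of_dvd_pow (n := 8)
    ⟨9 * A ^ 2 - 6 * A * n ^ 4 - 36 * B * n ^ 2, by linear_combination hroot_int⟩
  push_cast at hE hs
  have hw : (y - 9 * z₁ ^ 3) ^ 2 = ((B + 27 * z₁ ^ 6 : ℤ) : ℚ) := by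
    push_cast
    linear_combination hE - 3 * z₁ ^ 2 * hs
  obtain ⟨z₂, hz₂⟩ := Rat.exists_intCast_eq_of_isIntegral <| IsIntegral.of_pow two_pos <| by
    rw [hw, ← eq_intCast (algebraMap ℤ ℚ)]
    exact isIntegral_algebraMap
  refine ⟨z₁, z₂, ?_, ?_⟩
  · qify
    rw [hz₂]
    linear_combination -hs
  · qify
    rw [hz₂, hw]
    push_cast
    ring

lemma exists_three_torsion_coords_of_int_params {A B z₁ z₂ : ℤ}
    (hΔ : 4 * A ^ 3 + 27 * B ^ 2 ≠ 0)
    (hA : A = 27 * z₁ ^ 4 + 6 * z₁ * z₂) (hB : B = z₂ ^ 2 - 27 * z₁ ^ 6) :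
    ∃ x y : ℚ, y ^ 2 = x ^ 3 + A * x + B ∧ y ≠ 0 ∧ ((3 * x ^ 2 + A) / (2 * y)) ^ 2 = 3 * x := by
  refine ⟨3 * z₁ ^ 2, 9 * z₁ ^ 3 + z₂, ?_⟩
  have hy : (9 * z₁ ^ 3 + z₂ : ℚ) ≠ 0 := by
    intro hy
    obtain rfl : z₂ = -9 * z₁ ^ 3 := by
      have : (z₂ : ℚ) = -9 * z₁ ^ 3 := by linear_combination hy
      exact_mod_cast this
    exact hΔ (by rw [hA, hB]; ring)
  have hs : (3 * (3 * z₁ ^ 2 : ℚ) ^ 2 + A) / (2 * (9 * z₁ ^ 3 + z₂)) = 3 * z₁ := by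
    rw [div_eq_iff (mul_ne_zero two_ne_zero hy), hA]
    push_cast
    ring
  exact ⟨by rw [hA, hB]; push_cast; ring, hy, by rw [hs]; ring⟩

theorem order_three_iff (A B : ℤ) (hΔ : 4 * A ^ 3 + 27 * B ^ 2 ≠ 0) :
    (∃ P : (E A B).Point, addOrderOf P = 3) ↔
      ∃ z₁ z₂ : ℤ, A = 27 * z₁ ^ 4 + 6 * z₁ * z₂ ∧ B = z₂ ^ 2 - 27 * z₁ ^ 6 := by
  rw [exists_addOrderOf_E_eq_three_iff]
  constructor
  · rintro ⟨x, y, hE, hy, h3⟩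
    exact exists_int_params_of_tangent_slope hE
      (mul_div_cancel₀ _ (mul_ne_zero two_ne_zero hy)) h3
  · rintro ⟨z₁, z₂, hA, hB⟩
    exact exists_three_torsion_coords_of_int_params hΔ hA hB
end

section
/- Let E : Y² = X³ + A·X + B be an elliptic curve with A, B ∈ ℤ and 4A³ + 27B² ≠ 0, let P = (x₁, w₁) ∈ E(ℚ) be a point of order 5, and let (x₂, w₂) = [2]P. Then there exists an integer c such that c² = (2x₁ + x₂)·(x₁ + 2x₂). -/
open Polynomial WeierstrassCurve.Affine

theorem Rat.den_sq_dvd_of_aeval_eq_zero {x : ℚ} {a : ℤ} {N : ℕ} {f : ℤ[X]}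
    (hf : f.natDegree + 2 ≤ N) (hx : aeval x (C a * X ^ N + f) = 0) : (x.den : ℤ) ^ 2 ∣ a := by
  have hterm : ∀ i ≤ N,
      ((x.num ^ i * (x.den : ℤ) ^ (N - i) : ℤ) : ℚ) = (x.den : ℚ) ^ N * x ^ i := by
    intro i hi
    obtain ⟨k, rfl⟩ := Nat.exists_eq_add_of_le hi
    push_cast
    rw [← Rat.mul_den_eq_num, Nat.add_sub_cancel_left]
    ring
  have hZ : a * x.num ^ N + ∑ i ∈ Finset.range (N - 1),
      f.coeff i * (x.num ^ i * (x.den : ℤ) ^ (N - i)) = 0 := by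
    have hQ : ((a * x.num ^ N + ∑ i ∈ Finset.range (N - 1),
        f.coeff i * (x.num ^ i * (x.den : ℤ) ^ (N - i)) : ℤ) : ℚ) = 0 := by
      rw [← mul_zero ((x.den : ℚ) ^ N), ← hx, map_add,
        aeval_eq_sum_range' (by omega : f.natDegree < N - 1), Int.cast_add, Int.cast_mul,
        Int.cast_pow, ← Rat.mul_den_eq_num, Int.cast_sum, mul_add, Finset.mul_sum]
      refine congrArg₂ (· + ·) ?_ (Finset.sum_congr rfl fun i hi => ?_)
      · rw [aeval_mul, aeval_C, aeval_X_pow, algebraMap_int_eq, eq_intCast]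
        ring
      · rw [Int.cast_mul, hterm i (by simp at hi; omega), zsmul_eq_mul]
        ring
    exact_mod_cast hQ
  -- every term but the leading one carries at least two factors `x.den`
  have hdvd : (x.den : ℤ) ^ 2 ∣ a * x.num ^ N := by
    rw [eq_neg_of_add_eq_zero_left hZ]
    refine (Finset.dvd_sum fun i hi => ?_).neg_right
    exact ((pow_dvd_pow _ (by simp at hi; omega)).mul_left _).mul_left _
  exact (Rat.isCoprime_num_den x).symm.pow.dvd_of_dvd_mul_right hdvd

theorem Rat.den_eq_one_of_aeval_eq_zero {x : ℚ} {a : ℤ} {N : ℕ} {f : ℤ[X]} (ha : Squarefree a)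
    (hf : f.natDegree + 2 ≤ N) (hx : aeval x (C a * X ^ N + f) = 0) : x.den = 1 := by
  have hdvd := Rat.den_sq_dvd_of_aeval_eq_zero hf hx
  rw [sq] at hdvd
  simpa using Int.isUnit_iff_natAbs_eq.mp (ha _ hdvd)

theorem two_nsmul_two_nsmul_eq_neg_of_addOrderOf_eq_five {G : Type*} [AddGroup G] {P : G}
    (hP : addOrderOf P = 5) : 2 • 2 • P = -P := by
  rw [smul_smul, eq_neg_iff_add_eq_zero, ← succ_nsmul]
  simpa [hP] using addOrderOf_nsmul_eq_zero P

namespace E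

variable {A B : ℤ} {x w x' w' : ℚ}

/- The 3- and 5-division polynomials of `E A B`, with the leading term split off. -/
noncomputable def ψ₃ (A B : ℤ) : ℤ[X] :=
  C 3 * X ^ 4 + (C (6 * A) * X ^ 2 + C (12 * B) * X - C (A ^ 2))

noncomputable def ψ₅ (A B : ℤ) : ℤ[X] :=
  C 5 * X ^ 12 + (C (62 * A) * X ^ 10 + C (380 * B) * X ^ 9 - C (105 * A ^ 2) * X ^ 8
    + C (240 * A * B) * X ^ 7 - C (300 * A ^ 3 + 240 * B ^ 2) * X ^ 6
    - C (696 * A ^ 2 * B) * X ^ 5 - C (125 * A ^ 4 + 1920 * A * B ^ 2) * X ^ 4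
    - C (80 * A ^ 3 * B + 1600 * B ^ 3) * X ^ 3 - C (50 * A ^ 5 + 240 * A ^ 2 * B ^ 2) * X ^ 2
    - C (100 * A ^ 4 * B + 640 * A * B ^ 3) * X + C (A ^ 6 - 32 * A ^ 3 * B ^ 2 - 256 * B ^ 4))

theorem aeval_ψ₃_mul_aeval_ψ₅_eq_zero {x y : ℚ}
    (hxy : 4 * (x ^ 3 + A * x + B) * y = x ^ 4 - 2 * A * x ^ 2 - 8 * B * x + A ^ 2)
    (hyx : 4 * (y ^ 3 + A * y + B) * x = y ^ 4 - 2 * A * y ^ 2 - 8 * B * y + A ^ 2) :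
    aeval x (ψ₃ A B) * aeval x (ψ₅ A B) = 0 := by
  set c := x ^ 3 + A * x + B
  set u := 4 * c * y
  -- `(4c)⁴ · hyx` is polynomial in `x` and `u = 4cy`, and `hxy` evaluates `u`
  have hu : 16 * x * c * (u ^ 3 + A * u * (4 * c) ^ 2 + B * (4 * c) ^ 3)
      = u ^ 4 - 2 * A * u ^ 2 * (4 * c) ^ 2 - 8 * B * u * (4 * c) ^ 3 + A ^ 2 * (4 * c) ^ 4 := by
    linear_combination (4 * c) ^ 4 * hyx
  rw [hxy] at hu
  simp only [ψ₃, ψ₅, map_add, map_sub, map_mul, map_pow, map_ofNat, eq_intCast, map_intCast,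
    aeval_X]
  linear_combination hu

theorem den_eq_one_of_aeval_ψ₃_mul_aeval_ψ₅_eq_zero
    (hx : aeval x (ψ₃ A B) * aeval x (ψ₅ A B) = 0) : x.den = 1 := by
  rcases mul_eq_zero.mp hx with h3 | h5
  · exact Rat.den_eq_one_of_aeval_eq_zero Int.prime_three.squarefree
      (Nat.add_le_of_le_sub (by norm_num) (by compute_degree!)) h3
  · exact Rat.den_eq_one_of_aeval_eq_zero
      (Int.prime_iff_natAbs_prime.mpr (by norm_num)).squarefree
      (Nat.add_le_of_le_sub (by norm_num) (by compute_degree!)) h5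

theorem negY_eq (x w : ℚ) : (E A B).negY x w = -w := by
  simp [negY, E]

theorem Y_ne_zero_of_two_nsmul_eq_some {h : (E A B).Nonsingular x w}
    {h' : (E A B).Nonsingular x' w'} (h2 : 2 • Point.some _ _ h = Point.some _ _ h') :
    w ≠ 0 := by
  rintro rfl
  have h0 : Point.some _ _ h + Point.some _ _ h = 0 :=
    Point.add_self_of_Y_eq (by rw [negY_eq, neg_zero])
  exact Point.some_ne_zero h' (by rw [← h2, two_nsmul, h0])

theorem two_mul_add_eq_sq_of_two_nsmul_eq_some {h : (E A B).Nonsingular x w}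
    {h' : (E A B).Nonsingular x' w'} (h2 : 2 • Point.some _ _ h = Point.some _ _ h') :
    2 * x + x' = ((3 * x ^ 2 + A) / (2 * w)) ^ 2 := by
  have hw := Y_ne_zero_of_two_nsmul_eq_some h2
  have hy : w ≠ (E A B).negY x w := by
    rw [negY_eq]
    intro hw'
    exact hw (by linarith)
  rw [two_nsmul, Point.add_self_of_Y_ne hy, Point.some.injEq] at h2
  rw [← h2.1, addX, slope_of_Y_ne rfl hy, negY_eq]
  simp only [E]
  ring

theorem four_mul_cubic_mul_eq_of_two_nsmul_eq_some {h : (E A B).Nonsingular x w}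
    {h' : (E A B).Nonsingular x' w'} (h2 : 2 • Point.some _ _ h = Point.some _ _ h') :
    4 * (x ^ 3 + A * x + B) * x' = x ^ 4 - 2 * A * x ^ 2 - 8 * B * x + A ^ 2 := by
  have hw := Y_ne_zero_of_two_nsmul_eq_some h2
  have hs := two_mul_add_eq_sq_of_two_nsmul_eq_some h2
  have hE : w ^ 2 = x ^ 3 + A * x + B := by
    have h1 := equation_iff x w |>.mp h.1
    simp only [E] at h1
    linear_combination h1
  field_simp at hs
  linear_combination hs - 4 * (2 * x + x') * hE

end E

theorem order_five_double_square_general (A B : ℤ)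
    (x₁ w₁ x₂ w₂ : ℚ)
    (h₁ : (E A B).Nonsingular x₁ w₁) (h₂ : (E A B).Nonsingular x₂ w₂)
    (hord : addOrderOf (WeierstrassCurve.Affine.Point.some _ _ h₁) = 5)
    (hdbl : 2 • WeierstrassCurve.Affine.Point.some _ _ h₁ = WeierstrassCurve.Affine.Point.some _ _ h₂) :
    ∃ c : ℤ, (c : ℚ) ^ 2 = (2 * x₁ + x₂) * (x₁ + 2 * x₂) := by
  have hdbl' : 2 • Point.some _ _ h₂ = Point.some _ _ ((nonsingular_neg ..).mpr h₁) := by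
    rw [← hdbl, two_nsmul_two_nsmul_eq_neg_of_addOrderOf_eq_five hord, Point.neg_some]
  have hx₁ := E.four_mul_cubic_mul_eq_of_two_nsmul_eq_some hdbl
  have hx₂ := E.four_mul_cubic_mul_eq_of_two_nsmul_eq_some hdbl'
  have hn₁ : (x₁.num : ℚ) = x₁ := Rat.coe_int_num_of_den_eq_one <|
    E.den_eq_one_of_aeval_ψ₃_mul_aeval_ψ₅_eq_zero (E.aeval_ψ₃_mul_aeval_ψ₅_eq_zero hx₁ hx₂)
  have hn₂ : (x₂.num : ℚ) = x₂ := Rat.coe_int_num_of_den_eq_one <|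
    E.den_eq_one_of_aeval_ψ₃_mul_aeval_ψ₅_eq_zero (E.aeval_ψ₃_mul_aeval_ψ₅_eq_zero hx₂ hx₁)
  obtain ⟨c, hc⟩ : IsSquare ((2 * x₁.num + x₂.num) * (x₁.num + 2 * x₂.num)) := by
    rw [← Rat.isSquare_intCast_iff]
    refine ⟨(3 * x₁ ^ 2 + A) / (2 * w₁) * ((3 * x₂ ^ 2 + A) / (2 * w₂)), ?_⟩
    push_cast
    rw [hn₁, hn₂, E.two_mul_add_eq_sq_of_two_nsmul_eq_some hdbl, add_comm x₁,
      E.two_mul_add_eq_sq_of_two_nsmul_eq_some hdbl']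
    ring
  refine ⟨c, ?_⟩
  rw [← hn₁, ← hn₂]
  exact_mod_cast (sq c).trans hc.symm

theorem order_five_double_square (A B : ℤ) (hΔ : 4 * A ^ 3 + 27 * B ^ 2 ≠ 0)
    (x₁ w₁ x₂ w₂ : ℚ)
    (h₁ : (E A B).Nonsingular x₁ w₁) (h₂ : (E A B).Nonsingular x₂ w₂)
    (hord : addOrderOf (WeierstrassCurve.Affine.Point.some _ _ h₁) = 5)
    (hdbl : 2 • WeierstrassCurve.Affine.Point.some _ _ h₁ = WeierstrassCurve.Affine.Point.some _ _ h₂) :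
    ∃ c : ℤ, (c : ℚ) ^ 2 = (2 * x₁ + x₂) * (x₁ + 2 * x₂) :=
  order_five_double_square_general A B x₁ w₁ x₂ w₂ h₁ h₂ hord hdbl
end

section
/- Let E : Y² = X³ + A·X + B be an elliptic curve with A, B ∈ ℤ and 4A³ + 27B² ≠ 0, let P = (x₁, w₁) ∈ E(ℚ) be a point of order 5, and let (x₂, w₂) = [2]P. Then 4B = (x₁ + x₂)·(x₁² − 4x₁x₂ + x₂² − 2A) and A² + (2x₁² + 2x₁x₂ + 2x₂²)·A − x₁⁴ + x₁³x₂ + 9x₁²x₂² + x₁x₂³ − x₂⁴ = 0. -/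
/-!
Let `Q = [2]P`. Since `P` has order `5`, `[2]Q = -P`, so doubling sends `x₁ ↦ x₂` and `x₂ ↦ x₁`.
The doubling formula `x([2]R) = λ² - 2x(R)`, with `y²` eliminated through the curve equation,
turns each of these into a polynomial relation between `x₁, x₂, A, B`. Their difference is
`x₁ - x₂` times the first identity, and `x₁ ≠ x₂` because `Q ≠ ±P`; their sum, corrected by a
multiple of the first identity, is twice the second.
-/

section OrderFive

variable {G : Type*} [AddGroup G] {P : G}

theorem two_nsmul_ne_zero_of_addOrderOf_eq_five (hP : addOrderOf P = 5) : 2 • P ≠ 0 :=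
  nsmul_ne_zero_of_lt_addOrderOf (by norm_num) (by omega)

theorem two_nsmul_ne_self_of_addOrderOf_eq_five (hP : addOrderOf P = 5) : 2 • P ≠ P := by
  rw [two_nsmul, Ne, add_eq_right]
  rintro rfl
  simp at hP

theorem two_nsmul_ne_neg_of_addOrderOf_eq_five (hP : addOrderOf P = 5) : 2 • P ≠ -P := by
  intro h
  have h3 : 3 • P = 0 := by rw [succ_nsmul, h, neg_add_cancel]
  exact nsmul_ne_zero_of_lt_addOrderOf (by norm_num) (by omega) h3

theorem two_nsmul_two_nsmul_of_addOrderOf_eq_five (hP : addOrderOf P = 5) :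
    2 • 2 • P = -P := by
  rw [smul_smul, eq_neg_iff_add_eq_zero, ← succ_nsmul, show 2 * 2 + 1 = addOrderOf P by omega]
  exact addOrderOf_nsmul_eq_zero P

end OrderFive

theorem x_relations_of_doubling_relations {R : Type*} [CommRing R] [IsDomain R] {a b x₁ x₂ : R}
    (h2 : (2 : R) ≠ 0) (hx : x₁ ≠ x₂)
    (h₁ : (3 * x₁ ^ 2 + a) ^ 2 = 4 * (x₁ ^ 3 + a * x₁ + b) * (x₂ + 2 * x₁))
    (h₂ : (3 * x₂ ^ 2 + a) ^ 2 = 4 * (x₂ ^ 3 + a * x₂ + b) * (x₁ + 2 * x₂)) :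
    4 * b = (x₁ + x₂) * (x₁ ^ 2 - 4 * x₁ * x₂ + x₂ ^ 2 - 2 * a) ∧
      a ^ 2 + (2 * x₁ ^ 2 + 2 * x₁ * x₂ + 2 * x₂ ^ 2) * a
        - x₁ ^ 4 + x₁ ^ 3 * x₂ + 9 * x₁ ^ 2 * x₂ ^ 2 + x₁ * x₂ ^ 3 - x₂ ^ 4 = 0 := by
  have hb : 4 * b = (x₁ + x₂) * (x₁ ^ 2 - 4 * x₁ * x₂ + x₂ ^ 2 - 2 * a) := by
    have hdiff : (x₁ - x₂) * (4 * b - (x₁ + x₂) * (x₁ ^ 2 - 4 * x₁ * x₂ + x₂ ^ 2 - 2 * a)) = 0 := by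
      linear_combination h₂ - h₁
    exact sub_eq_zero.mp ((mul_eq_zero.mp hdiff).resolve_left (sub_ne_zero.mpr hx))
  refine ⟨hb, (mul_eq_zero.mp ?_).resolve_left h2⟩
  linear_combination h₁ + h₂ + 3 * (x₁ + x₂) * hb

namespace WeierstrassCurve.Affine

variable {F : Type*} [Field F] {W : WeierstrassCurve.Affine F}

theorem Y_ne_negY_of_two_nsmul_ne_zero [DecidableEq F] {x y : F} {h : W.Nonsingular x y}
    (h2 : 2 • Point.some x y h ≠ 0) : y ≠ W.negY x y :=
  fun hy => h2 (by rw [two_nsmul, Point.add_self_of_Y_eq hy])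

section ShortNF

variable [W.IsShortNF]

theorem negY_of_isShortNF (x y : F) : W.negY x y = -y := by
  simp [negY]

theorem equation_iff_of_isShortNF (x y : F) :
    W.Equation x y ↔ y ^ 2 = x ^ 3 + W.a₄ * x + W.a₆ := by
  rw [equation_iff, a₁_of_isShortNF, a₂_of_isShortNF, a₃_of_isShortNF]
  ring_nf

variable [DecidableEq F]

/-- The `x`-coordinate of `[2](x₁, y₁)` is `λ² - 2x₁` with `λ = (3x₁² + a₄) / 2y₁`; clearing the
denominator and using the curve equation eliminates `y₁`. -/
theorem doubling_relation {x₁ y₁ x₂ y₂ : F} {h₁ : W.Nonsingular x₁ y₁} {h₂ : W.Nonsingular x₂ y₂}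
    (hy : y₁ ≠ W.negY x₁ y₁) (hdbl : 2 • Point.some x₁ y₁ h₁ = Point.some x₂ y₂ h₂) :
    (3 * x₁ ^ 2 + W.a₄) ^ 2 = 4 * (x₁ ^ 3 + W.a₄ * x₁ + W.a₆) * (x₂ + 2 * x₁) := by
  rw [two_nsmul, Point.add_self_of_Y_ne hy, Point.some.injEq] at hdbl
  have hy₁ : 2 * y₁ ≠ 0 := by
    rw [negY_of_isShortNF] at hy
    contrapose! hy
    linear_combination hy
  have hx₂ : W.addX x₁ x₁ (W.slope x₁ x₁ y₁ y₁) = x₂ := hdbl.1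
  rw [slope_of_Y_ne rfl hy, negY_of_isShortNF, sub_neg_eq_add, ← two_mul, addX] at hx₂
  simp only [a₁_of_isShortNF, a₂_of_isShortNF, zero_mul, add_zero, sub_zero] at hx₂
  have hslope : (3 * x₁ ^ 2 + W.a₄) / (2 * y₁) * (2 * y₁) = 3 * x₁ ^ 2 + W.a₄ :=
    div_mul_cancel₀ _ hy₁
  rw [← (equation_iff_of_isShortNF x₁ y₁).mp h₁.1, ← hx₂, ← hslope]
  ring

theorem x_relations_of_addOrderOf_eq_five {x₁ y₁ x₂ y₂ : F}
    {h₁ : W.Nonsingular x₁ y₁} {h₂ : W.Nonsingular x₂ y₂}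
    (hord : addOrderOf (Point.some x₁ y₁ h₁) = 5)
    (hdbl : 2 • Point.some x₁ y₁ h₁ = Point.some x₂ y₂ h₂) :
    4 * W.a₆ = (x₁ + x₂) * (x₁ ^ 2 - 4 * x₁ * x₂ + x₂ ^ 2 - 2 * W.a₄) ∧
      W.a₄ ^ 2 + (2 * x₁ ^ 2 + 2 * x₁ * x₂ + 2 * x₂ ^ 2) * W.a₄
        - x₁ ^ 4 + x₁ ^ 3 * x₂ + 9 * x₁ ^ 2 * x₂ ^ 2 + x₁ * x₂ ^ 3 - x₂ ^ 4 = 0 := by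
  have hy₁ := Y_ne_negY_of_two_nsmul_ne_zero (two_nsmul_ne_zero_of_addOrderOf_eq_five hord)
  have hQ : 2 • Point.some x₂ y₂ h₂ = -Point.some x₁ y₁ h₁ :=
    hdbl ▸ two_nsmul_two_nsmul_of_addOrderOf_eq_five hord
  have hy₂ := Y_ne_negY_of_two_nsmul_ne_zero (hQ ▸ neg_ne_zero.mpr (Point.some_ne_zero h₁))
  have h2 : (2 : F) ≠ 0 := fun h => hy₁ (by rw [negY_of_isShortNF]; linear_combination y₁ * h)
  have hx : x₁ ≠ x₂ := by
    rw [Ne, Point.X_eq_iff (h₁ := h₁) (h₂ := h₂), ← hdbl, not_or]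
    exact ⟨(two_nsmul_ne_self_of_addOrderOf_eq_five hord).symm,
      fun h => two_nsmul_ne_neg_of_addOrderOf_eq_five hord (neg_eq_iff_eq_neg.mpr h).symm⟩
  exact x_relations_of_doubling_relations h2 hx (doubling_relation hy₁ hdbl)
    (doubling_relation hy₂ (hQ.trans (Point.neg_some h₁)))

end ShortNF

end WeierstrassCurve.Affine

instance (A B : ℤ) : (E A B).IsShortNF := ⟨rfl, rfl, rfl⟩

theorem order_five_relations_general (A B : ℤ)
    (x₁ w₁ x₂ w₂ : ℚ)
    (h₁ : (E A B).Nonsingular x₁ w₁) (h₂ : (E A B).Nonsingular x₂ w₂)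
    (hord : addOrderOf (WeierstrassCurve.Affine.Point.some _ _ h₁) = 5)
    (hdbl : 2 • WeierstrassCurve.Affine.Point.some _ _ h₁ = WeierstrassCurve.Affine.Point.some _ _ h₂) :
    4 * (B : ℚ) = (x₁ + x₂) * (x₁ ^ 2 - 4 * x₁ * x₂ + x₂ ^ 2 - 2 * A) ∧
      (A : ℚ) ^ 2 + (2 * x₁ ^ 2 + 2 * x₁ * x₂ + 2 * x₂ ^ 2) * A
        - x₁ ^ 4 + x₁ ^ 3 * x₂ + 9 * x₁ ^ 2 * x₂ ^ 2 + x₁ * x₂ ^ 3 - x₂ ^ 4 = 0 :=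
  WeierstrassCurve.Affine.x_relations_of_addOrderOf_eq_five hord hdbl

theorem order_five_relations (A B : ℤ) (hΔ : 4 * A ^ 3 + 27 * B ^ 2 ≠ 0)
    (x₁ w₁ x₂ w₂ : ℚ)
    (h₁ : (E A B).Nonsingular x₁ w₁) (h₂ : (E A B).Nonsingular x₂ w₂)
    (hord : addOrderOf (WeierstrassCurve.Affine.Point.some _ _ h₁) = 5)
    (hdbl : 2 • WeierstrassCurve.Affine.Point.some _ _ h₁ = WeierstrassCurve.Affine.Point.some _ _ h₂) :
    4 * (B : ℚ) = (x₁ + x₂) * (x₁ ^ 2 - 4 * x₁ * x₂ + x₂ ^ 2 - 2 * A) ∧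
      (A : ℚ) ^ 2 + (2 * x₁ ^ 2 + 2 * x₁ * x₂ + 2 * x₂ ^ 2) * A
        - x₁ ^ 4 + x₁ ^ 3 * x₂ + 9 * x₁ ^ 2 * x₂ ^ 2 + x₁ * x₂ ^ 3 - x₂ ^ 4 = 0 :=
  order_five_relations_general A B x₁ w₁ x₂ w₂ h₁ h₂ hord hdbl
end

section
/- Let E : Y² = X³ + A·X + B be an elliptic curve with A, B ∈ ℤ and 4A³ + 27B² ≠ 0, let P = (x₁, w₁) ∈ E(ℚ) be a point of order 7, let (x₂, w₂) = [2]P and (x₃, w₃) = [3]P. Then there exists an integer c such that c² = (x₂ + 2x₁)·(x₁ + x₂ + x₃). -/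
theorem Rat.den_eq_one_of_forall_padicNorm_le_one {q : ℚ}
    (h : ∀ (p : ℕ) [Fact p.Prime], padicNorm p q ≤ 1) : q.den = 1 := by
  by_contra hq
  have hp : Fact q.den.minFac.Prime := ⟨Nat.minFac_prime hq⟩
  have hp_den : q.den.minFac ∣ q.den := Nat.minFac_dvd _
  have hp_num : ¬ (q.den.minFac : ℤ) ∣ q.num := fun hdvd =>
    hp.out.not_dvd_one <| q.reduced.gcd_eq_one ▸ Nat.dvd_gcd
      (Int.natCast_dvd.mp hdvd) hp_den
  have key := congrArg (padicNorm q.den.minFac) (Rat.mul_den_eq_num q)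
  rw [padicNorm.mul, (padicNorm.int_eq_one_iff _).mpr hp_num] at key
  have hden_lt := (padicNorm.nat_lt_one_iff _).mpr hp_den
  nlinarith [h q.den.minFac, padicNorm.nonneg (p := q.den.minFac) (q.den : ℚ)]

theorem Nat.Prime.not_pow_four_dvd_sixtyThree {p : ℕ} (hp : p.Prime) : ¬ p ^ 4 ∣ 63 := by
  intro hdvd
  have hle : p ^ 4 ≤ 63 := Nat.le_of_dvd (by norm_num) hdvd
  have hp3 : p < 3 := by
    by_contra! h
    have h81 := Nat.pow_le_pow_left h 4
    omega
  have hp2 := hp.two_le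
  interval_cases p
  norm_num at hdvd

def doubleX (A : ℤ) (x w : ℚ) : ℚ := ((3 * x ^ 2 + A) / (2 * w)) ^ 2 - 2 * x

section Padic

variable {p : ℕ} [Fact p.Prime]

theorem padicNorm_intCast_mul_le (n : ℤ) (q : ℚ) : padicNorm p (n * q) ≤ padicNorm p q := by
  rw [padicNorm.mul]
  exact mul_le_of_le_one_left (padicNorm.nonneg q) (padicNorm.of_int n)

variable {A B : ℤ} {x w : ℚ}

theorem padicNorm_sq_eq_cube_of_one_lt (heq : w ^ 2 = x ^ 3 + A * x + B)
    (hx : 1 < padicNorm p x) : padicNorm p w ^ 2 = padicNorm p x ^ 3 := by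
  have hlow : padicNorm p (A * x + B) < padicNorm p (x ^ 3) := by
    rw [IsAbsoluteValue.abv_pow (padicNorm p)]
    calc padicNorm p (A * x + B) ≤ max (padicNorm p (A * x)) (padicNorm p B) :=
          padicNorm.nonarchimedean
      _ ≤ padicNorm p x :=
          max_le (padicNorm_intCast_mul_le A x) ((padicNorm.of_int B).trans hx.le)
      _ < padicNorm p x ^ 3 := lt_self_pow₀ hx (by norm_num)
  rw [← IsAbsoluteValue.abv_pow (padicNorm p), ← IsAbsoluteValue.abv_pow (padicNorm p), heq,
    add_assoc, padicNorm.add_eq_max_of_ne hlow.ne', max_eq_left hlow.le]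

theorem sq_le_padicNorm_of_sq_eq_cube (hx : 1 < padicNorm p x)
    (hxw : padicNorm p w ^ 2 = padicNorm p x ^ 3) : (p : ℚ) ^ 2 ≤ padicNorm p x := by
  have hx0 : x ≠ 0 := by rintro rfl; norm_num at hx
  have hw0 : w ≠ 0 := by
    rintro rfl
    rw [padicNorm.zero, zero_pow two_ne_zero, eq_comm, pow_eq_zero_iff three_ne_zero] at hxw
    linarith
  have hp : (1 : ℚ) < p := by exact_mod_cast (Fact.out : p.Prime).one_lt
  rw [padicNorm.eq_zpow_of_nonzero hx0, padicNorm.eq_zpow_of_nonzero hw0, ← zpow_natCast,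
    ← zpow_natCast, ← zpow_mul, ← zpow_mul] at hxw
  have hv := zpow_right_injective₀ (by positivity) hp.ne' hxw
  rw [padicNorm.eq_zpow_of_nonzero hx0] at hx ⊢
  have hneg : 0 < -padicValRat p x := (one_lt_zpow_iff_right₀ hp).mp hx
  rw [← zpow_natCast]
  exact zpow_le_zpow_right₀ hp.le (by push_cast at hv ⊢; omega)

theorem doubleX_sub_div_four (hw : w ≠ 0) (heq : w ^ 2 = x ^ 3 + A * x + B) :
    doubleX A x w - x / 4 =
      (((-3 * A : ℤ) : ℚ) * x ^ 2 + ((-9 * B : ℤ) : ℚ) * x + ((A ^ 2 : ℤ) : ℚ)) /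
        (4 * w ^ 2) := by
  unfold doubleX
  push_cast
  field_simp
  linear_combination (-36 * x) * heq

theorem padicNorm_doubleX_of_one_lt (hw : w ≠ 0) (heq : w ^ 2 = x ^ 3 + A * x + B)
    (hx : 1 < padicNorm p x) :
    padicNorm p (doubleX A x w) = padicNorm p x / padicNorm p 4 ∧
      padicNorm p (doubleX A x w - x / 4) ≤ 1 / (padicNorm p 4 * padicNorm p x) := by
  have h4 : 0 < padicNorm p 4 := (padicNorm.nonneg _).lt_of_ne' (padicNorm.nonzero four_ne_zero)
  have hnum : padicNorm p (((-3 * A : ℤ) : ℚ) * x ^ 2 + ((-9 * B : ℤ) : ℚ) * x +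
      ((A ^ 2 : ℤ) : ℚ)) ≤ padicNorm p x ^ 2 := by
    rw [← IsAbsoluteValue.abv_pow (padicNorm p)]
    refine padicNorm.nonarchimedean.trans (max_le (padicNorm.nonarchimedean.trans
      (max_le (padicNorm_intCast_mul_le _ _) ?_)) ?_)
    · rw [IsAbsoluteValue.abv_pow (padicNorm p)]
      nlinarith [padicNorm_intCast_mul_le (p := p) (-9 * B) x]
    · rw [IsAbsoluteValue.abv_pow (padicNorm p)]
      nlinarith [padicNorm.of_int (p := p) (A ^ 2)]
  have hsmall : padicNorm p (doubleX A x w - x / 4) ≤ 1 / (padicNorm p 4 * padicNorm p x) := by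
    rw [doubleX_sub_div_four hw heq, padicNorm.div, padicNorm.mul,
      IsAbsoluteValue.abv_pow (padicNorm p), padicNorm_sq_eq_cube_of_one_lt heq hx,
      div_le_div_iff₀ (by positivity) (by positivity)]
    nlinarith [mul_le_mul_of_nonneg_right hnum
      (by positivity : 0 ≤ padicNorm p 4 * padicNorm p x)]
  have hlt : padicNorm p (doubleX A x w - x / 4) < padicNorm p (x / 4) := by
    refine hsmall.trans_lt ?_
    rw [padicNorm.div, div_lt_div_iff₀ (by positivity) h4]
    nlinarith [mul_pos h4 (mul_pos (sub_pos.2 hx) (by linarith : (0 : ℚ) < padicNorm p x + 1))]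
  refine ⟨?_, hsmall⟩
  rw [← padicNorm.div, ← add_sub_cancel (x / 4) (doubleX A x w),
    padicNorm.add_eq_max_of_ne hlt.ne', max_eq_left hlt.le]

theorem padicNorm_le_one_of_doubleX_cycle {x₁ w₁ x₂ w₂ x₃ w₃ : ℚ}
    (hw₁ : w₁ ≠ 0) (hw₂ : w₂ ≠ 0) (hw₃ : w₃ ≠ 0)
    (he₁ : w₁ ^ 2 = x₁ ^ 3 + A * x₁ + B) (he₂ : w₂ ^ 2 = x₂ ^ 3 + A * x₂ + B)
    (he₃ : w₃ ^ 2 = x₃ ^ 3 + A * x₃ + B)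
    (d₁ : doubleX A x₁ w₁ = x₂) (d₂ : doubleX A x₂ w₂ = x₃) (d₃ : doubleX A x₃ w₃ = x₁) :
    padicNorm p x₁ ≤ 1 := by
  by_contra! hx₁
  have h4 : 0 < padicNorm p 4 := (padicNorm.nonneg _).lt_of_ne' (padicNorm.nonzero four_ne_zero)
  have grow : ∀ {x : ℚ}, 1 < padicNorm p x → 1 < padicNorm p x / padicNorm p 4 :=
    fun hx => hx.trans_le <|
      le_div_self (padicNorm.nonneg _) h4 (by exact_mod_cast padicNorm.of_nat 4)
  obtain ⟨N₂, E₁⟩ := padicNorm_doubleX_of_one_lt hw₁ he₁ hx₁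
  rw [d₁] at N₂ E₁
  obtain ⟨N₃, E₂⟩ := padicNorm_doubleX_of_one_lt hw₂ he₂ (N₂ ▸ grow hx₁)
  rw [d₂] at N₃ E₂
  obtain ⟨N₁, E₃⟩ := padicNorm_doubleX_of_one_lt hw₃ he₃ (N₃ ▸ grow (N₂ ▸ grow hx₁))
  rw [d₃] at N₁ E₃
  -- going round the cycle divides `|x₁|` by `|4|³`
  have h4one : padicNorm p 4 = 1 := by
    rw [N₃, N₂, div_div, div_div, eq_div_iff (by positivity)] at N₁
    refine (pow_eq_one_iff_of_nonneg h4.le three_ne_zero).mp ?_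
    nlinarith
  rw [h4one, div_one] at N₂ N₃
  rw [h4one, one_mul] at E₁ E₂ E₃
  rw [N₂] at E₂
  rw [N₃, N₂] at E₃
  have h63 : padicNorm p (((63 : ℤ) : ℚ) * x₁) ≤ 1 / padicNorm p x₁ := by
    have hsum : ((63 : ℤ) : ℚ) * x₁ = ((4 : ℤ) : ℚ) * (x₂ - x₁ / 4) +
        ((16 : ℤ) : ℚ) * (x₃ - x₂ / 4) + ((64 : ℤ) : ℚ) * (x₁ - x₃ / 4) := by push_cast; ring
    rw [hsum]
    exact padicNorm.nonarchimedean.trans (max_le (padicNorm.nonarchimedean.trans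
      (max_le ((padicNorm_intCast_mul_le _ _).trans E₁)
        ((padicNorm_intCast_mul_le _ _).trans E₂))) ((padicNorm_intCast_mul_le _ _).trans E₃))
  have hp2 := sq_le_padicNorm_of_sq_eq_cube hx₁ (padicNorm_sq_eq_cube_of_one_lt he₁ hx₁)
  have hp0 : (0 : ℚ) < p := by exact_mod_cast (Fact.out : p.Prime).pos
  have hnorm : padicNorm p ((63 : ℤ) : ℚ) ≤ (p : ℚ) ^ (-(4 : ℕ) : ℤ) := by
    rw [padicNorm.mul, le_div_iff₀ (by linarith)] at h63
    rw [zpow_neg, zpow_natCast, ← one_div, le_div_iff₀ (by positivity)]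
    have hp4 : ((p : ℚ) ^ 2) ^ 2 ≤ padicNorm p x₁ ^ 2 :=
      pow_le_pow_left₀ (by positivity) hp2 2
    nlinarith [mul_le_mul_of_nonneg_left hp4 (padicNorm.nonneg (p := p) ((63 : ℤ) : ℚ))]
  exact (Fact.out : p.Prime).not_pow_four_dvd_sixtyThree
    (Int.natCast_dvd_natCast.mp (padicNorm.dvd_iff_norm_le.mpr hnorm))

end Padic

theorem exists_int_sq_of_doubleX_cycle {A B : ℤ} {x₁ w₁ x₂ w₂ x₃ w₃ : ℚ}
    (hw₁ : w₁ ≠ 0) (hw₂ : w₂ ≠ 0) (hw₃ : w₃ ≠ 0)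
    (he₁ : w₁ ^ 2 = x₁ ^ 3 + A * x₁ + B) (he₂ : w₂ ^ 2 = x₂ ^ 3 + A * x₂ + B)
    (he₃ : w₃ ^ 2 = x₃ ^ 3 + A * x₃ + B)
    (d₁ : doubleX A x₁ w₁ = x₂) (d₂ : doubleX A x₂ w₂ = x₃) (d₃ : doubleX A x₃ w₃ = x₁)
    (hs : IsSquare (x₁ + x₂ + x₃)) :
    ∃ c : ℤ, (c : ℚ) ^ 2 = (x₂ + 2 * x₁) * (x₁ + x₂ + x₃) := by
  have hden : x₁.den = 1 ∧ x₂.den = 1 ∧ x₃.den = 1 := by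
    refine ⟨?_, ?_, ?_⟩ <;>
      refine Rat.den_eq_one_of_forall_padicNorm_le_one fun p _ => ?_
    exacts [padicNorm_le_one_of_doubleX_cycle hw₁ hw₂ hw₃ he₁ he₂ he₃ d₁ d₂ d₃,
      padicNorm_le_one_of_doubleX_cycle hw₂ hw₃ hw₁ he₂ he₃ he₁ d₂ d₃ d₁,
      padicNorm_le_one_of_doubleX_cycle hw₃ hw₁ hw₂ he₃ he₁ he₂ d₃ d₁ d₂]
  obtain ⟨hden₁, hden₂, hden₃⟩ := hden
  obtain ⟨n₁, rfl⟩ : ∃ n : ℤ, (n : ℚ) = x₁ := ⟨_, Rat.coe_int_num_of_den_eq_one hden₁⟩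
  obtain ⟨n₂, rfl⟩ : ∃ n : ℤ, (n : ℚ) = x₂ := ⟨_, Rat.coe_int_num_of_den_eq_one hden₂⟩
  obtain ⟨n₃, rfl⟩ : ∃ n : ℤ, (n : ℚ) = x₃ := ⟨_, Rat.coe_int_num_of_den_eq_one hden₃⟩
  obtain ⟨s, hs⟩ := hs
  unfold doubleX at d₁
  have hsq : IsSquare (((n₂ + 2 * n₁) * (n₁ + n₂ + n₃) : ℤ) : ℚ) :=
    ⟨(3 * n₁ ^ 2 + A) / (2 * w₁) * s, by
      push_cast
      linear_combination (n₂ + 2 * n₁ : ℚ) * hs - s ^ 2 * d₁⟩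
  obtain ⟨c, hc⟩ := Rat.isSquare_intCast_iff.mp hsq
  exact ⟨c, by rw [sq, ← Int.cast_mul, ← hc]; push_cast; ring⟩

open WeierstrassCurve.Affine WeierstrassCurve.Affine.Point

theorem WeierstrassCurve.Affine.Point.X_ne_of_two_nsmul {F : Type*} [Field F] [DecidableEq F]
    {W : WeierstrassCurve.Affine F} {x₁ y₁ x₂ y₂ : F} {h₁ : W.Nonsingular x₁ y₁}
    {h₂ : W.Nonsingular x₂ y₂} (h2 : 2 • some _ _ h₁ = some _ _ h₂)
    (h3 : 3 • some _ _ h₁ ≠ 0) :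
    x₂ ≠ x₁ := by
  intro hx
  rcases X_eq_iff.mp hx with h | h
  · rw [← h2, two_nsmul, add_eq_right] at h
    exact some_ne_zero h₁ h
  · exact h3 (by rw [succ_nsmul, h2, h, neg_add_cancel])

namespace E

variable {A B : ℤ}

theorem sq_eq_of_nonsingular {x w : ℚ} (h : (E A B).Nonsingular x w) :
    w ^ 2 = x ^ 3 + A * x + B := by
  simpa [E, equation_iff] using h.1

theorem doubleX_of_two_nsmul {x w x' w' : ℚ} {h : (E A B).Nonsingular x w}
    {h' : (E A B).Nonsingular x' w'} (h2 : 2 • some _ _ h = some _ _ h') :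
    w ≠ 0 ∧ doubleX A x w = x' := by
  have hy : w ≠ (E A B).negY x w := fun hy =>
    some_ne_zero h' (by rw [← h2, two_nsmul, add_self_of_Y_eq hy])
  rw [two_nsmul, add_self_of_Y_ne hy, some.injEq] at h2
  have hw : w ≠ 0 := by
    intro hw
    simp [negY, E, hw] at hy
  refine ⟨hw, h2.1 ▸ ?_⟩
  rw [slope_of_Y_ne rfl hy]
  simp [addX, negY, E, doubleX]
  field_simp
  ring

theorem add_X_eq_slope_sq {x₁ w₁ x₂ w₂ x₃ w₃ : ℚ} {h₁ : (E A B).Nonsingular x₁ w₁}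
    {h₂ : (E A B).Nonsingular x₂ w₂} {h₃ : (E A B).Nonsingular x₃ w₃} (hx : x₁ ≠ x₂)
    (hadd : some _ _ h₁ + some _ _ h₂ = some _ _ h₃) :
    x₁ + x₂ + x₃ = ((w₁ - w₂) / (x₁ - x₂)) ^ 2 := by
  rw [add_of_X_ne hx, some.injEq] at hadd
  rw [← hadd.1, slope_of_X_ne hx]
  simp [addX, E]

end E

theorem order_seven_square_general (A B : ℤ)
    (x₁ w₁ x₂ w₂ x₃ w₃ : ℚ)
    (h₁ : (E A B).Nonsingular x₁ w₁) (h₂ : (E A B).Nonsingular x₂ w₂)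
    (h₃ : (E A B).Nonsingular x₃ w₃)
    (hord : addOrderOf (WeierstrassCurve.Affine.Point.some _ _ h₁) = 7)
    (hdbl : 2 • WeierstrassCurve.Affine.Point.some _ _ h₁ = WeierstrassCurve.Affine.Point.some _ _ h₂)
    (htrpl : 3 • WeierstrassCurve.Affine.Point.some _ _ h₁ = WeierstrassCurve.Affine.Point.some _ _ h₃) :
    ∃ c : ℤ, (c : ℚ) ^ 2 = (x₂ + 2 * x₁) * (x₁ + x₂ + x₃) := by
  have h7 : 7 • some _ _ h₁ = 0 := hord ▸ addOrderOf_nsmul_eq_zero _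
  have h4 : 2 • some _ _ h₂ = -some _ _ h₃ := by
    rw [← hdbl, ← htrpl, eq_neg_iff_add_eq_zero, ← h7]
    abel
  have h6 : 2 • some _ _ h₃ = -some _ _ h₁ := by
    rw [← htrpl, eq_neg_iff_add_eq_zero, ← h7]
    abel
  rw [neg_some] at h4 h6
  obtain ⟨hw₁, d₁⟩ := E.doubleX_of_two_nsmul hdbl
  obtain ⟨hw₂, d₂⟩ := E.doubleX_of_two_nsmul h4
  obtain ⟨hw₃, d₃⟩ := E.doubleX_of_two_nsmul h6
  have hx := X_ne_of_two_nsmul hdbl (htrpl ▸ some_ne_zero h₃)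
  have hs := E.add_X_eq_slope_sq (h₁ := h₂) (h₂ := h₁) (h₃ := h₃) hx
    (by rw [← hdbl, ← htrpl, ← succ_nsmul])
  exact exists_int_sq_of_doubleX_cycle hw₁ hw₂ hw₃ (E.sq_eq_of_nonsingular h₁)
    (E.sq_eq_of_nonsingular h₂) (E.sq_eq_of_nonsingular h₃) d₁ d₂ d₃
    ⟨(w₂ - w₁) / (x₂ - x₁), by linear_combination hs⟩

theorem order_seven_square (A B : ℤ) (hΔ : 4 * A ^ 3 + 27 * B ^ 2 ≠ 0)
    (x₁ w₁ x₂ w₂ x₃ w₃ : ℚ)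
    (h₁ : (E A B).Nonsingular x₁ w₁) (h₂ : (E A B).Nonsingular x₂ w₂)
    (h₃ : (E A B).Nonsingular x₃ w₃)
    (hord : addOrderOf (WeierstrassCurve.Affine.Point.some _ _ h₁) = 7)
    (hdbl : 2 • WeierstrassCurve.Affine.Point.some _ _ h₁ = WeierstrassCurve.Affine.Point.some _ _ h₂)
    (htrpl : 3 • WeierstrassCurve.Affine.Point.some _ _ h₁ = WeierstrassCurve.Affine.Point.some _ _ h₃) :
    ∃ c : ℤ, (c : ℚ) ^ 2 = (x₂ + 2 * x₁) * (x₁ + x₂ + x₃) :=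
  order_seven_square_general A B x₁ w₁ x₂ w₂ x₃ w₃ h₁ h₂ h₃ hord hdbl htrpl
end

section
/- Let E : Y² = X³ + A·X + B be an elliptic curve with A, B ∈ ℤ and 4A³ + 27B² ≠ 0, let P = (x, y) ∈ E(ℚ) be a point of order 9, and let (x', y') = [3]P. Then x, x', y' are integers and (x − x') divides (2y')⁶ in ℤ. -/
/-!
`Q = [3]P` has order 3, so `x'` is a root of `ψ₃ = 3X⁴ + 6AX² + 12BX - A²`; a rational root of
`ψ₃` is an integer, and then so is `y'`. If `[3]R = (w, _)` then `Φ₃(x(R)) = w ψ₃(x(R))²`, and for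
`w ∈ ℤ` the polynomial `Φ₃ - w ψ₃²` is monic of degree 9 over `ℤ`. As
`[3]P = [3](P + Q) = [3](P - Q) = Q`, the `x`-coordinates of `P` and `P ± Q` are integers. The
slopes `λ±` of the chords through `P` and `±Q` satisfy `λ±² = x + x' + x(P ± Q)`, so they are
integers too, and `(λ₋ - λ₊)(x - x') = 2y'`.
-/

open Polynomial

namespace WeierstrassCurve

section ShortNF

variable {R : Type*} [CommRing R] (W : WeierstrassCurve R) [W.IsShortNF]

lemma eval_Ψ₂Sq_of_isShortNF (x : R) : W.Ψ₂Sq.eval x = 4 * (x ^ 3 + W.a₄ * x + W.a₆) := by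
  simp [Ψ₂Sq]; ring

lemma eval_Ψ₃_of_isShortNF (x : R) :
    W.Ψ₃.eval x = 3 * x ^ 4 + 6 * W.a₄ * x ^ 2 + 12 * W.a₆ * x - W.a₄ ^ 2 := by
  simp [Ψ₃]; ring

lemma eval_preΨ₄_of_isShortNF (x : R) :
    W.preΨ₄.eval x = 2 * (x ^ 6 + 5 * W.a₄ * x ^ 4 + 20 * W.a₆ * x ^ 3 - 5 * W.a₄ ^ 2 * x ^ 2
      - 4 * W.a₄ * W.a₆ * x - W.a₄ ^ 3 - 8 * W.a₆ ^ 2) := by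
  simp [preΨ₄]; ring

lemma Affine.equation_iff_of_isShortNF_s16 (x y : R) :
    W.toAffine.Equation x y ↔ y ^ 2 = x ^ 3 + W.a₄ * x + W.a₆ := by
  simp [Affine.equation_iff]

lemma Affine.negY_of_isShortNF_s16 (x y : R) : W.toAffine.negY x y = -y := by
  simp [Affine.negY]

lemma Affine.addX_of_isShortNF (x₁ x₂ ℓ : R) : W.toAffine.addX x₁ x₂ ℓ = ℓ ^ 2 - x₁ - x₂ := by
  simp [Affine.addX]

lemma Affine.addY_of_isShortNF (x₁ x₂ y₁ ℓ : R) :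
    W.toAffine.addY x₁ x₂ y₁ ℓ = -(ℓ * (W.toAffine.addX x₁ x₂ ℓ - x₁) + y₁) := by
  simp [Affine.addY, Affine.negAddY]

variable {W}

/-- `ℓ` is the slope of the tangent at `R = (u, v)`, `u₂ = x([2]R)` and `ℓ'` the slope of the chord
through `[2]R` and `R`, so that `ℓ' ^ 2 - u₂ - u = x([3]R)`. -/
lemma eval_Φ_three_eq_of_chord {u v ℓ ℓ' u₂ : R} (hv : W.toAffine.Equation u v)
    (hℓ : ℓ * (2 * v) = 3 * u ^ 2 + W.a₄) (hu₂ : u₂ = ℓ ^ 2 - 2 * u)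
    (hℓ' : (ℓ' + ℓ) * (u₂ - u) = -2 * v) :
    (W.Φ 3).eval u = (ℓ' ^ 2 - u₂ - u) * (W.ΨSq 3).eval u := by
  rw [Affine.equation_iff_of_isShortNF_s16] at hv
  rw [Φ_three, ΨSq_three]
  simp only [eval_sub, eval_mul, eval_X, eval_pow, eval_preΨ₄_of_isShortNF,
    eval_Ψ₂Sq_of_isShortNF, eval_Ψ₃_of_isShortNF]
  set Ψ := 3 * u ^ 4 + 6 * W.a₄ * u ^ 2 + 12 * W.a₆ * u - W.a₄ ^ 2
  set f := u ^ 3 + W.a₄ * u + W.a₆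
  have hsum : (ℓ' + ℓ) * Ψ = 8 * v * f := by
    linear_combination -4 * f * hℓ'
      + (ℓ' + ℓ) * ((2 * v * ℓ + 3 * u ^ 2 + W.a₄) * hℓ - 4 * ℓ ^ 2 * hv + 4 * f * hu₂)
  linear_combination Ψ ^ 2 * hu₂ + ((ℓ - ℓ') * Ψ - 8 * f * v) * hsum + 8 * f * Ψ * hℓ
    - 64 * f ^ 2 * hv

end ShortNF

namespace Affine

variable {F : Type*} [Field F] [DecidableEq F] {W : Affine F}

lemma X_ne_of_three_nsmul_eq_some {x y x' y' : F} {h : W.Nonsingular x y}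
    {h' : W.Nonsingular x' y'} (h2 : 2 • Point.some _ _ h ≠ 0) (h4 : 4 • Point.some _ _ h ≠ 0)
    (h3 : 3 • Point.some _ _ h = Point.some _ _ h') : x ≠ x' := by
  intro hx
  rcases Point.X_eq_iff.mp hx with hP | hP <;> rw [← h3] at hP
  · rw [succ_nsmul, right_eq_add] at hP
    exact h2 hP
  · rw [succ_nsmul, add_comm] at h4
    exact h4 (eq_neg_iff_add_eq_zero.mp hP)

variable [W.IsShortNF]

lemma slope_self_mul_of_isShortNF {x y : F} (hy : y ≠ W.negY x y) :
    W.slope x x y y * (2 * y) = 3 * x ^ 2 + W.a₄ := by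
  have h2y : 2 * y ≠ 0 := by
    rw [negY_of_isShortNF_s16] at hy
    exact fun h0 => hy (by linear_combination h0)
  rw [slope_of_Y_ne rfl hy, negY_of_isShortNF_s16, sub_neg_eq_add, ← two_mul, div_mul_cancel₀ _ h2y]
  simp

lemma X_eq_of_add_eq_some {x₁ x₂ x₃ y₁ y₂ y₃ : F} {h₁ : W.Nonsingular x₁ y₁}
    {h₂ : W.Nonsingular x₂ y₂} {h₃ : W.Nonsingular x₃ y₃} (hx : x₁ ≠ x₂)
    (hadd : Point.some _ _ h₁ + Point.some _ _ h₂ = Point.some _ _ h₃) :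
    x₃ = W.slope x₁ x₂ y₁ y₂ ^ 2 - x₁ - x₂ := by
  rw [Point.add_of_X_ne hx, Point.some.injEq, addX_of_isShortNF] at hadd
  exact hadd.1.symm

lemma slope_negY_sub_slope_mul_sub {x₁ x₂ y₁ y₂ : F} (hx : x₁ ≠ x₂) :
    (W.slope x₁ x₂ y₁ (W.negY x₂ y₂) - W.slope x₁ x₂ y₁ y₂) * (x₁ - x₂) = 2 * y₂ := by
  rw [slope_of_X_ne hx, slope_of_X_ne hx, ← sub_div, div_mul_cancel₀ _ (sub_ne_zero.mpr hx),
    negY_of_isShortNF_s16]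
  ring

lemma eval_Ψ₃_eq_zero_of_three_nsmul_eq_zero {u v : F} {h : W.Nonsingular u v}
    (h3 : 3 • Point.some _ _ h = 0) : W.Ψ₃.eval u = 0 := by
  have hy : v ≠ W.negY u v := by
    intro hy
    rw [succ_nsmul, two_nsmul, Point.add_self_of_Y_eq hy, zero_add] at h3
    exact Point.some_ne_zero h h3
  have h2 : 2 • Point.some _ _ h = -Point.some _ _ h := by
    rw [← add_eq_zero_iff_eq_neg, ← succ_nsmul, h3]
  rw [two_nsmul, Point.add_self_of_Y_ne hy, Point.neg_some, Point.some.injEq,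
    addX_of_isShortNF] at h2
  have hv := (equation_iff_of_isShortNF_s16 W u v).mp h.1
  have hℓ := slope_self_mul_of_isShortNF hy
  rw [eval_Ψ₃_of_isShortNF]
  linear_combination (2 * v * W.slope u u v v + 3 * u ^ 2 + W.a₄) * hℓ - 4 * v ^ 2 * h2.1
    - 12 * u * hv

lemma eval_Φ_three_eq_of_three_nsmul_eq_some {u v w z : F} {h : W.Nonsingular u v}
    {h' : W.Nonsingular w z} (h3 : 3 • Point.some _ _ h = Point.some _ _ h') :
    (W.Φ 3).eval u = w * (W.ΨSq 3).eval u := by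
  by_cases hy : v = W.negY u v
  -- then `[3]R = R` and `Ψ₂Sq(u) = 4v² = 0`
  · rw [succ_nsmul, two_nsmul, Point.add_self_of_Y_eq hy, zero_add, Point.some.injEq] at h3
    have hv := (equation_iff_of_isShortNF_s16 W u v).mp h.1
    rw [negY_of_isShortNF_s16] at hy
    rw [← h3.1, Φ_three, ΨSq_three]
    simp only [eval_sub, eval_mul, eval_X, eval_pow, eval_Ψ₂Sq_of_isShortNF]
    linear_combination (W.preΨ₄.eval u) * (4 * hv - 2 * v * hy)
  have h2R := Point.add_self_of_Y_ne (h₁ := h) hy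
  have hu₂ : W.addX u u (W.slope u u v v) ≠ u := by
    intro hu
    rcases Point.X_eq_iff.mp hu with h2 | h2 <;> rw [← h2R, ← two_nsmul] at h2
    · rw [two_nsmul, add_eq_right] at h2
      exact Point.some_ne_zero h h2
    · rw [succ_nsmul, h2, neg_add_cancel] at h3
      exact Point.some_ne_zero h' h3.symm
  rw [succ_nsmul, two_nsmul, h2R] at h3
  rw [X_eq_of_add_eq_some hu₂ h3]
  refine eval_Φ_three_eq_of_chord h.1 (slope_self_mul_of_isShortNF hy)
    (by rw [addX_of_isShortNF]; ring) ?_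
  rw [slope_of_X_ne hu₂, add_mul, div_mul_cancel₀ _ (sub_ne_zero.mpr hu₂), addY_of_isShortNF]
  ring

end Affine

section Integrality

variable {R K : Type*} [CommRing R] [Nontrivial R] [CommRing K] [Algebra R K]

lemma monic_Φ_sub_C_mul_ΨSq (W : WeierstrassCurve R) {n : ℤ} (hn : n ≠ 0) (b : R) :
    (W.Φ n - C b * W.ΨSq n).Monic := by
  refine Monic.sub_of_left (p := W.Φ n) (W.leadingCoeff_Φ n) (degree_lt_degree ?_)
  calc (C b * W.ΨSq n).natDegree ≤ n.natAbs ^ 2 - 1 :=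
        (natDegree_C_mul_le b _).trans (W.natDegree_ΨSq_le n)
    _ < n.natAbs ^ 2 := Nat.sub_one_lt (pow_ne_zero 2 (Int.natAbs_ne_zero.mpr hn))
    _ = (W.Φ n).natDegree := (W.natDegree_Φ n).symm

lemma isIntegral_of_aeval_Φ_eq (W : WeierstrassCurve R) {n : ℤ} (hn : n ≠ 0) {u : K} (b : R)
    (h : aeval u (W.Φ n) = algebraMap R K b * aeval u (W.ΨSq n)) : _root_.IsIntegral R u :=
  ⟨_, W.monic_Φ_sub_C_mul_ΨSq hn b, by rw [← aeval_def]; simp [h]⟩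

end Integrality

end WeierstrassCurve

/-- `3u` is a root of a monic integer quartic, and the equation then forces `3 ∣ 3u`. -/
lemma isIntegral_of_Ψ₃_eq_zero {a b : ℤ} {u : ℚ}
    (h : 3 * u ^ 4 + 6 * a * u ^ 2 + 12 * b * u - a ^ 2 = 0) : IsIntegral ℤ u := by
  have h3u : IsIntegral ℤ (3 * u) := by
    refine ⟨X ^ 4 + C (18 * a) * X ^ 2 + C (108 * b) * X - C (27 * a ^ 2), by monicity!, ?_⟩
    rw [← aeval_def]
    simp [map_ofNat]
    linear_combination 27 * h
  obtain ⟨c, hc⟩ := IsIntegrallyClosed.isIntegral_iff.mp h3u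
  rw [algebraMap_int_eq, eq_intCast] at hc
  have hc4 : c ^ 4 = 3 * (9 * a ^ 2 - 6 * a * c ^ 2 - 36 * b * c) := by
    have : (c : ℚ) ^ 4 = 3 * (9 * a ^ 2 - 6 * a * c ^ 2 - 36 * b * c) := by
      rw [hc]; linear_combination 27 * h
    exact_mod_cast this
  obtain ⟨d, rfl⟩ := Int.prime_three.dvd_of_dvd_pow (Dvd.intro _ hc4.symm)
  push_cast at hc
  exact ⟨X - C d, monic_X_sub_C _, by rw [← aeval_def]; simp; linarith⟩

open WeierstrassCurve Affine

instance inst_s16 (A B : ℤ) : (E A B).IsShortNF := ⟨rfl, rfl, rfl⟩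

section E

variable {A B : ℤ}

lemma isIntegral_of_three_nsmul_eq_zero {u v : ℚ} {h : (E A B).Nonsingular u v}
    (h3 : 3 • Point.some _ _ h = 0) : IsIntegral ℤ u := by
  have hΨ₃ := eval_Ψ₃_eq_zero_of_three_nsmul_eq_zero h3
  rw [eval_Ψ₃_of_isShortNF] at hΨ₃
  exact isIntegral_of_Ψ₃_eq_zero hΨ₃

lemma isIntegral_of_three_nsmul_eq_some {u v w z : ℚ} {h : (E A B).Nonsingular u v}
    {h' : (E A B).Nonsingular w z} (h3 : 3 • Point.some _ _ h = Point.some _ _ h')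
    (hw : IsIntegral ℤ w) : IsIntegral ℤ u := by
  obtain ⟨b, rfl⟩ := IsIntegrallyClosed.isIntegral_iff.mp hw
  let W : WeierstrassCurve ℤ := ⟨0, 0, 0, A, B⟩
  have hE : W.map (algebraMap ℤ ℚ) = E A B := rfl
  refine W.isIntegral_of_aeval_Φ_eq three_ne_zero b ?_
  rw [← eval_map_algebraMap, ← eval_map_algebraMap, ← map_Φ, ← map_ΨSq, hE]
  exact eval_Φ_three_eq_of_three_nsmul_eq_some h3

lemma isIntegral_Y_of_isIntegral_X {u v : ℚ} (h : (E A B).Nonsingular u v)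
    (hu : IsIntegral ℤ u) : IsIntegral ℤ v := by
  refine IsIntegral.of_pow two_pos ?_
  rw [(equation_iff_of_isShortNF_s16 _ u v).mp h.1]
  exact ((hu.pow 3).add ((isIntegral_intCast A).mul hu)).add (isIntegral_intCast B)

lemma isIntegral_slope_of_three_nsmul_add_eq_some {x₁ x₂ y₁ y₂ w z : ℚ}
    {h₁ : (E A B).Nonsingular x₁ y₁} {h₂ : (E A B).Nonsingular x₂ y₂}
    {h' : (E A B).Nonsingular w z} (hx : x₁ ≠ x₂) (hx₁ : IsIntegral ℤ x₁)
    (hx₂ : IsIntegral ℤ x₂) (hw : IsIntegral ℤ w)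
    (h3 : 3 • (Point.some _ _ h₁ + Point.some _ _ h₂) = Point.some _ _ h') :
    IsIntegral ℤ ((E A B).slope x₁ x₂ y₁ y₂) := by
  rw [Point.add_of_X_ne hx] at h3
  have hx₃ := isIntegral_of_three_nsmul_eq_some h3 hw
  rw [addX_of_isShortNF] at hx₃
  have hsq := hx₃.add (hx₁.add hx₂)
  rw [sub_sub, sub_add_cancel] at hsq
  exact hsq.of_pow two_pos

end E

theorem order_nine_divisibility_general (A B : ℤ)
    (x y x' y' : ℚ)
    (h : (E A B).Nonsingular x y) (h' : (E A B).Nonsingular x' y')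
    (hord : addOrderOf (WeierstrassCurve.Affine.Point.some x y h) = 9)
    (htrpl : 3 • WeierstrassCurve.Affine.Point.some x y h = WeierstrassCurve.Affine.Point.some x' y' h') :
    ∃ a b c : ℤ, x = (a : ℚ) ∧ x' = (b : ℚ) ∧ y' = (c : ℚ) ∧ (a - b) ∣ (2 * c) ^ 6 := by
  set P := Point.some x y h
  set Q := Point.some x' y' h'
  have hP (n : ℕ) (hn : n ≠ 0) (hn9 : n < 9) : n • P ≠ 0 :=
    nsmul_ne_zero_of_lt_addOrderOf hn (hord ▸ hn9)
  have hQ : 3 • Q = 0 := by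
    rw [← htrpl, smul_smul, show 3 * 3 = addOrderOf P by rw [hord]]
    exact addOrderOf_nsmul_eq_zero P
  have hx' := isIntegral_of_three_nsmul_eq_zero hQ
  have hx := isIntegral_of_three_nsmul_eq_some htrpl hx'
  have hxx' := X_ne_of_three_nsmul_eq_some (hP 2 (by norm_num) (by norm_num))
    (hP 4 (by norm_num) (by norm_num)) htrpl
  have hplus : 3 • (P + Q) = Q := by rw [nsmul_add, htrpl, hQ, add_zero]
  have hminus : 3 • (P + -Q) = Q := by rw [nsmul_add, neg_nsmul, htrpl, hQ, neg_zero, add_zero]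
  obtain ⟨l, hl⟩ := IsIntegrallyClosed.isIntegral_iff.mp
    (isIntegral_slope_of_three_nsmul_add_eq_some hxx' hx hx' hx' hplus)
  obtain ⟨m, hm⟩ := IsIntegrallyClosed.isIntegral_iff.mp
    (isIntegral_slope_of_three_nsmul_add_eq_some hxx' hx hx' hx' hminus)
  have hq := slope_negY_sub_slope_mul_sub (W := E A B) (y₁ := y) (y₂ := y') hxx'
  obtain ⟨a, rfl⟩ := IsIntegrallyClosed.isIntegral_iff.mp hx
  obtain ⟨b, rfl⟩ := IsIntegrallyClosed.isIntegral_iff.mp hx'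
  obtain ⟨c, rfl⟩ := IsIntegrallyClosed.isIntegral_iff.mp (isIntegral_Y_of_isIntegral_X h' hx')
  rw [← hl, ← hm] at hq
  refine ⟨a, b, c, rfl, rfl, rfl, dvd_pow (Dvd.intro_left (m - l) ?_) (by norm_num)⟩
  simp only [algebraMap_int_eq, eq_intCast] at hq
  exact_mod_cast hq

theorem order_nine_divisibility (A B : ℤ) (hΔ : 4 * A ^ 3 + 27 * B ^ 2 ≠ 0)
    (x y x' y' : ℚ)
    (h : (E A B).Nonsingular x y) (h' : (E A B).Nonsingular x' y')
    (hord : addOrderOf (WeierstrassCurve.Affine.Point.some x y h) = 9)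
    (htrpl : 3 • WeierstrassCurve.Affine.Point.some x y h = WeierstrassCurve.Affine.Point.some x' y' h') :
    ∃ a b c : ℤ, x = (a : ℚ) ∧ x' = (b : ℚ) ∧ y' = (c : ℚ) ∧ (a - b) ∣ (2 * c) ^ 6 :=
  order_nine_divisibility_general A B x y x' y' h h' hord htrpl
end
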